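/- arXiv:1110.2074 — 6 statements merged into one kernel-verified Lean document; each statement's English description precedes it below -/
import Mathlib

section
/- Let 0 < R_ON < R_OFF < R and let X, Y ≥ 0 satisfy X > (1 + R_OFF/R)·Y. Then there exists δ > 0 such that for all M₁, M₂ ∈ [R_ON, R_OFF], with Δ = R(M₁+M₂) + M₁M₂, the loop currents I₁ = (−X(R+M₂) + YR)/Δ and I₂ = (Y(R+M₁) − XR)/Δ satisfy I₁ ≤ −δ and I₂ ≤ −δ; that is, both loop currents are negative and bounded away from 0 uniformly over all admissible pairs of memristances. -/
/-- If X > (1 + R_OFF/R)·Y then both loop currents of the memristor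
max-circuit are negative and uniformly bounded away from 0 over all admissible
memristances M₁, M₂ ∈ [R_ON, R_OFF]. -/
theorem memristor_currents_bounded_away_from_zero
    (RON ROFF R X Y : ℝ)
    (hON : 0 < RON) (hONOFF : RON < ROFF) (hOFFR : ROFF < R)
    (hX : 0 ≤ X) (hY : 0 ≤ Y) (hXY : X > (1 + ROFF / R) * Y) :
    ∃ δ > 0, ∀ M₁ M₂ : ℝ,
      M₁ ∈ Set.Icc RON ROFF → M₂ ∈ Set.Icc RON ROFF →
      (-X * (R + M₂) + Y * R) / (R * (M₁ + M₂) + M₁ * M₂) ≤ -δ ∧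
      (Y * (R + M₁) - X * R) / (R * (M₁ + M₂) + M₁ * M₂) ≤ -δ := by
  have hR : (0:ℝ) < R := lt_trans (lt_trans hON hONOFF) hOFFR
  have hXY' : X * R > R * Y + ROFF * Y := by
    have := (mul_lt_mul_of_pos_right hXY hR)
    have hRne : R ≠ 0 := ne_of_gt hR
    field_simp at this
    nlinarith
  have hXgtY : X > Y := by nlinarith [mul_nonneg (le_of_lt (lt_trans hON hONOFF)) hY]
  set ε : ℝ := min (R * (X - Y)) (X * R - R * Y - ROFF * Y) with hε
  have hεpos : 0 < ε := by
    apply lt_min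
    · nlinarith
    · nlinarith
  set Δmax : ℝ := 2 * R * ROFF + ROFF ^ 2 with hΔmax
  have hΔmaxpos : 0 < Δmax := by nlinarith
  refine ⟨ε / Δmax, div_pos hεpos hΔmaxpos, ?_⟩
  intro M₁ M₂ h₁ h₂
  obtain ⟨h₁l, h₁u⟩ := h₁
  obtain ⟨h₂l, h₂u⟩ := h₂
  have hM₁ : 0 < M₁ := lt_of_lt_of_le hON h₁l
  have hM₂ : 0 < M₂ := lt_of_lt_of_le hON h₂l
  have hΔpos : 0 < R * (M₁ + M₂) + M₁ * M₂ := by positivity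
  have hΔle : R * (M₁ + M₂) + M₁ * M₂ ≤ Δmax := by nlinarith
  have hε1 : -X * (R + M₂) + Y * R ≤ -ε := by
    have := min_le_left (R * (X - Y)) (X * R - R * Y - ROFF * Y)
    nlinarith [mul_nonneg hX (le_of_lt hM₂)]
  have hε2 : Y * (R + M₁) - X * R ≤ -ε := by
    have := min_le_right (R * (X - Y)) (X * R - R * Y - ROFF * Y)
    nlinarith [mul_nonneg hY (le_of_lt hM₂)]
  constructor
  · rw [div_le_iff₀ hΔpos]
    have : -(ε / Δmax) * (R * (M₁ + M₂) + M₁ * M₂) = -(ε * (R * (M₁ + M₂) + M₁ * M₂)) / Δmax := by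
      ring
    rw [this, le_div_iff₀ hΔmaxpos] at *
    nlinarith
  · rw [div_le_iff₀ hΔpos]
    have : -(ε / Δmax) * (R * (M₁ + M₂) + M₁ * M₂) = -(ε * (R * (M₁ + M₂) + M₁ * M₂)) / Δmax := by
      ring
    rw [this, le_div_iff₀ hΔmaxpos] at *
    nlinarith
end

section
/- Let 0 < R_ON < R_OFF, R > 0, and 0 ≤ Y ≤ X ≤ 1. Then the limiting output voltage Z∞ = (X·R_OFF + Y·R_ON)/(R_ON + R_OFF + R_ON·R_OFF/R) of the memristor max-circuit satisfies |Z∞ − X| ≤ R_ON/R_OFF + R_ON/R; in particular Z∞ ≈ max(X,Y) when R_OFF/R_ON and R/R_ON are large. -/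
/-- The limiting output voltage of the memristor max-circuit is
within R_ON/R_OFF + R_ON/R of X = max(X,Y). -/
theorem memristor_max_circuit_limit_close_to_max
    (RON ROFF R X Y : ℝ) (hON : 0 < RON) (hONOFF : RON < ROFF) (hR : 0 < R)
    (hY : 0 ≤ Y) (hYX : Y ≤ X) (hX : X ≤ 1) :
    |(X * ROFF + Y * RON) / (RON + ROFF + RON * ROFF / R) - X| ≤
      RON / ROFF + RON / R := by
  have hOFF : 0 < ROFF := hON.trans hONOFF
  have hD : 0 < RON + ROFF + RON * ROFF / R := by positivity
  have h1 : (X * ROFF + Y * RON) / (RON + ROFF + RON * ROFF / R) - X =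
      -((RON * (X - Y) + X * (RON * ROFF / R)) / (RON + ROFF + RON * ROFF / R)) := by
    field_simp
    ring
  have hXY : (0:ℝ) ≤ X - Y := by linarith
  have hX0 : (0:ℝ) ≤ X := le_trans hY hYX
  have hq : 0 < RON * ROFF / R := by positivity
  have hnum : 0 ≤ RON * (X - Y) + X * (RON * ROFF / R) := by positivity
  rw [h1, abs_neg, abs_of_nonneg (div_nonneg hnum hD.le), div_le_iff₀ hD]
  have key : RON * (X - Y) + X * (RON * ROFF / R) ≤ RON + RON * ROFF / R := by
    nlinarith
  have e : RON / R * ROFF = RON * ROFF / R := by ring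
  have e1 : RON / ROFF * ROFF = RON := div_mul_cancel₀ _ hOFF.ne'
  nlinarith [e, e1, mul_pos (div_pos hON hOFF) hON, mul_pos (div_pos hON hOFF) hq,
    mul_pos (div_pos hON hR) hON, mul_pos (div_pos hON hR) hq]
end

section
/- Let 0 < R_ON < R_OFF, R > 0, let 0 ≤ X ≤ 1 and 0 ≤ Y ≤ 1, and let M₁, M₂ ∈ [R_ON, R_OFF]. Then the output voltage Z = (X·M₂ + Y·M₁)/(M₁ + M₂ + M₁M₂/R) satisfies |Z − X| ≤ |Y − X| + R_OFF/R. In particular, if X and Y are nearly equal and R ≫ R_OFF, then Z ≈ X ≈ max(X,Y) regardless of the values of the memristances. -/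
/-- For any admissible memristances the output voltage Z of the
memristor max-circuit satisfies |Z − X| ≤ |Y − X| + R_OFF/R. -/
theorem memristor_max_circuit_near_equal_inputs
    (RON ROFF R X Y M₁ M₂ : ℝ)
    (hON : 0 < RON) (hONOFF : RON < ROFF) (hR : 0 < R)
    (hX0 : 0 ≤ X) (hX1 : X ≤ 1) (hY0 : 0 ≤ Y) (hY1 : Y ≤ 1)
    (hM₁ : M₁ ∈ Set.Icc RON ROFF) (hM₂ : M₂ ∈ Set.Icc RON ROFF) :
    |(X * M₂ + Y * M₁) / (M₁ + M₂ + M₁ * M₂ / R) - X| ≤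
      |Y - X| + ROFF / R := by
  obtain ⟨h1l, h1u⟩ := hM₁
  obtain ⟨h2l, h2u⟩ := hM₂
  have hM₁0 : 0 < M₁ := lt_of_lt_of_le hON h1l
  have hM₂0 : 0 < M₂ := lt_of_lt_of_le hON h2l
  have hD : 0 < M₁ + M₂ + M₁ * M₂ / R := by positivity
  have key : (X * M₂ + Y * M₁) / (M₁ + M₂ + M₁ * M₂ / R) - X
      = ((Y - X) * M₁ - X * (M₁ * M₂ / R)) / (M₁ + M₂ + M₁ * M₂ / R) := by
    field_simp
    ring
  rw [key, abs_div, abs_of_pos hD, div_le_iff₀ hD]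
  have tri : |(Y - X) * M₁ - X * (M₁ * M₂ / R)| ≤ |Y - X| * M₁ + X * (M₁ * M₂ / R) := by
    calc |(Y - X) * M₁ - X * (M₁ * M₂ / R)|
        ≤ |(Y - X) * M₁| + |X * (M₁ * M₂ / R)| := abs_sub _ _
      _ = |Y - X| * M₁ + X * (M₁ * M₂ / R) := by
          rw [abs_mul, abs_of_pos hM₁0, abs_of_nonneg (by positivity : (0:ℝ) ≤ X * (M₁ * M₂ / R))]
  refine tri.trans ?_
  have habs : 0 ≤ |Y - X| := abs_nonneg _
  have h1 : |Y - X| * M₁ ≤ |Y - X| * (M₁ + M₂ + M₁ * M₂ / R) := by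
    apply mul_le_mul_of_nonneg_left _ habs
    nlinarith [div_nonneg (mul_nonneg hM₁0.le hM₂0.le) hR.le]
  have h2 : X * (M₁ * M₂ / R) ≤ ROFF / R * (M₁ + M₂ + M₁ * M₂ / R) := by
    have hROFF : 0 < ROFF := hON.trans hONOFF
    have key2 : X * (M₁ * M₂) ≤ ROFF * (M₁ + M₂ + M₁ * M₂ / R) := by
      nlinarith [div_pos (mul_pos hM₁0 hM₂0) hR, mul_pos hROFF hM₁0,
        mul_nonneg (sub_nonneg.mpr hX1) (mul_pos hM₁0 hM₂0).le,
        mul_nonneg (sub_nonneg.mpr h1u) hM₂0.le]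
    calc X * (M₁ * M₂ / R) = X * (M₁ * M₂) / R := by ring
      _ ≤ ROFF * (M₁ + M₂ + M₁ * M₂ / R) / R := by gcongr
      _ = ROFF / R * (M₁ + M₂ + M₁ * M₂ / R) := by ring
  nlinarith [h1, h2]
end

section
/- Let 0 < R_ON < R_OFF, R > 0, and 0 ≤ Y ≤ X ≤ 1. Then the limiting output voltage Z'∞ = (X·R_ON + Y·R_OFF)/(R_ON + R_OFF + R_ON·R_OFF/R) of the memristor min-circuit satisfies |Z'∞ − Y| ≤ R_ON/R_OFF + R_ON/R; in particular Z'∞ ≈ min(X,Y) when R_OFF/R_ON and R/R_ON are large. -/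
/-!
Writing `D = R_ON + R_OFF + R_ON R_OFF / R`, one has
`Z'∞ - Y = R_ON (X - Y) / D - Y (R_ON R_OFF / R) / D`.
Both terms are nonnegative; since `D ≥ R_OFF` and `X - Y, Y ≤ 1`, the first is at most
`R_ON / R_OFF` and the second at most `(R_ON R_OFF / R) / R_OFF = R_ON / R`. The difference of
two nonnegative numbers is bounded in absolute value by the larger of them.
-/

section MinCircuit

variable {RON ROFF R : ℝ}

theorem minCircuit_limit_sub_eq (X Y : ℝ) (hD : RON + ROFF + RON * ROFF / R ≠ 0) :
    (X * RON + Y * ROFF) / (RON + ROFF + RON * ROFF / R) - Y =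
      RON * (X - Y) / (RON + ROFF + RON * ROFF / R) -
        Y * (RON * ROFF / R) / (RON + ROFF + RON * ROFF / R) := by
  field_simp
  ring

variable (hON : 0 ≤ RON) (hOFF : 0 < ROFF) (hR : 0 ≤ R)
include hON hOFF hR

theorem minCircuit_denom_ge : ROFF ≤ RON + ROFF + RON * ROFF / R := by
  have : 0 ≤ RON * ROFF / R := by positivity
  linarith

theorem minCircuit_bridge_term_le {Y : ℝ} (hY : Y ≤ 1) :
    Y * (RON * ROFF / R) / (RON + ROFF + RON * ROFF / R) ≤ RON / R := calc
  Y * (RON * ROFF / R) / (RON + ROFF + RON * ROFF / R)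
      ≤ 1 * (RON * ROFF / R) / ROFF := by
        gcongr
        exact minCircuit_denom_ge hON hOFF hR
  _ = RON / R := by field_simp

theorem minCircuit_input_term_le {X Y : ℝ} (hXY : X - Y ≤ 1) :
    RON * (X - Y) / (RON + ROFF + RON * ROFF / R) ≤ RON / ROFF := calc
  RON * (X - Y) / (RON + ROFF + RON * ROFF / R) ≤ RON * 1 / ROFF := by
        gcongr
        exact minCircuit_denom_ge hON hOFF hR
  _ = RON / ROFF := by rw [mul_one]

end MinCircuit

/-- The limiting output voltage of the memristor min-circuit is
within R_ON/R_OFF + R_ON/R of Y = min(X,Y). -/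
theorem memristor_min_circuit_limit_close_to_min
    (RON ROFF R X Y : ℝ) (hON : 0 < RON) (hONOFF : RON < ROFF) (hR : 0 < R)
    (hY : 0 ≤ Y) (hYX : Y ≤ X) (hX : X ≤ 1) :
    |(X * RON + Y * ROFF) / (RON + ROFF + RON * ROFF / R) - Y| ≤
      RON / ROFF + RON / R := by
  have hOFF : 0 < ROFF := hON.trans hONOFF
  have hD : 0 < RON + ROFF + RON * ROFF / R := by positivity
  rw [minCircuit_limit_sub_eq X Y hD.ne']
  have hinput := minCircuit_input_term_le hON.le hOFF hR.le (by linarith : X - Y ≤ 1)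
  have hbridge := minCircuit_bridge_term_le hON.le hOFF hR.le (hYX.trans hX)
  apply abs_sub_le_of_nonneg_of_le
  · exact div_nonneg (mul_nonneg hON.le (sub_nonneg.2 hYX)) hD.le
  · linarith [div_nonneg hON.le hR.le]
  · positivity
  · linarith [div_nonneg hON.le hOFF.le]
end

section
/- (Theorem 1, max-circuit.) Let 0 < R_ON < R_OFF < R, let 0 ≤ Y ≤ X ≤ 1, and suppose the memristances M₁, M₂ : ℝ → ℝ of the max-circuit take values in [R_ON, R_OFF] and satisfy M₁(t) → R_ON and M₂(t) → R_OFF as t → ∞. Then the output voltage Z(t) = (X·M₂(t) + Y·M₁(t))/(M₁(t) + M₂(t) + M₁(t)M₂(t)/R) converges as t → ∞ to a limit L with |L − max(X,Y)| ≤ R_ON/R_OFF + R_ON/R; in particular, when R ≫ R_OFF ≫ R_ON the circuit computes max(X,Y) up to an arbitrarily small error. -/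
/-!
The limit is the output at `(M₁, M₂) = (R_ON, R_OFF)`, by continuity of the output away from a
vanishing denominator `D = R_ON + R_OFF + R_ON R_OFF / R`. Its distance to `max X Y = X` is
`R_ON (X - Y + X R_OFF / R) / D`, which is nonnegative, and the numerator is at most
`R_ON (1 + R_OFF / R)` while `D ≥ R_OFF`.
-/

open Filter Topology

noncomputable def maxCircuitOutput (X Y R m₁ m₂ : ℝ) : ℝ :=
  (X * m₂ + Y * m₁) / (m₁ + m₂ + m₁ * m₂ / R)

section

variable {X Y R a b : ℝ}

theorem tendsto_maxCircuitOutput {α : Type*} {l : Filter α} {m₁ m₂ : α → ℝ}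
    (h₁ : Tendsto m₁ l (𝓝 a)) (h₂ : Tendsto m₂ l (𝓝 b)) (hD : a + b + a * b / R ≠ 0) :
    Tendsto (fun t => maxCircuitOutput X Y R (m₁ t) (m₂ t)) l
      (𝓝 (maxCircuitOutput X Y R a b)) :=
  ((h₂.const_mul X).add (h₁.const_mul Y)).div ((h₁.add h₂).add ((h₁.mul h₂).div_const R)) hD

theorem sub_maxCircuitOutput (hD : a + b + a * b / R ≠ 0) :
    X - maxCircuitOutput X Y R a b = a * (X - Y + X * b / R) / (a + b + a * b / R) := by
  rw [maxCircuitOutput, eq_div_iff hD, sub_mul, div_mul_cancel₀ _ hD]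
  ring

theorem abs_maxCircuitOutput_sub_max_le (ha : 0 < a) (hb : 0 < b) (hR : 0 < R)
    (hY : 0 ≤ Y) (hYX : Y ≤ X) (hX : X ≤ 1) :
    |maxCircuitOutput X Y R a b - max X Y| ≤ a / b + a / R := by
  have hD : b ≤ a + b + a * b / R := by
    have : 0 ≤ a * b / R := by positivity
    linarith
  have hDpos : 0 < a + b + a * b / R := hb.trans_le hD
  have hXb : X * b / R ≤ b / R := by gcongr; exact mul_le_of_le_one_left hb.le hX
  have hnum_nonneg : 0 ≤ X - Y + X * b / R := by
    have : 0 ≤ X * b / R := by have := hY.trans hYX; positivity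
    linarith
  rw [max_eq_left hYX, abs_sub_comm, sub_maxCircuitOutput hDpos.ne',
    abs_of_nonneg (by positivity)]
  calc a * (X - Y + X * b / R) / (a + b + a * b / R)
      ≤ a * (1 + b / R) / b := by
        gcongr
        linarith
    _ = a / b + a / R := by field_simp

end

theorem memristor_max_circuit_computes_max_general
    (RON ROFF R X Y : ℝ)
    (hON : 0 < RON) (hONOFF : RON < ROFF) (hOFFR : ROFF < R)
    (hY : 0 ≤ Y) (hYX : Y ≤ X) (hX : X ≤ 1)
    (M₁ M₂ : ℝ → ℝ)
    (hM₁ : Filter.Tendsto M₁ Filter.atTop (nhds RON))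
    (hM₂ : Filter.Tendsto M₂ Filter.atTop (nhds ROFF)) :
    ∃ L : ℝ,
      Filter.Tendsto
        (fun t => (X * M₂ t + Y * M₁ t) / (M₁ t + M₂ t + M₁ t * M₂ t / R))
        Filter.atTop (nhds L) ∧
      |L - max X Y| ≤ RON / ROFF + RON / R := by
  have hOFF : 0 < ROFF := hON.trans hONOFF
  have hR : 0 < R := hOFF.trans hOFFR
  exact ⟨maxCircuitOutput X Y R RON ROFF,
    tendsto_maxCircuitOutput hM₁ hM₂ (by positivity),
    abs_maxCircuitOutput_sub_max_le hON hOFF hR hY hYX hX⟩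

/-- Theorem 1, max-circuit: the output voltage Z(t) converges to
a limit L with |L − max(X,Y)| ≤ R_ON/R_OFF + R_ON/R. -/
theorem memristor_max_circuit_computes_max
    (RON ROFF R X Y : ℝ)
    (hON : 0 < RON) (hONOFF : RON < ROFF) (hOFFR : ROFF < R)
    (hY : 0 ≤ Y) (hYX : Y ≤ X) (hX : X ≤ 1)
    (M₁ M₂ : ℝ → ℝ)
    (hM₁mem : ∀ t, M₁ t ∈ Set.Icc RON ROFF)
    (hM₂mem : ∀ t, M₂ t ∈ Set.Icc RON ROFF)
    (hM₁ : Filter.Tendsto M₁ Filter.atTop (nhds RON))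
    (hM₂ : Filter.Tendsto M₂ Filter.atTop (nhds ROFF)) :
    ∃ L : ℝ,
      Filter.Tendsto
        (fun t => (X * M₂ t + Y * M₁ t) / (M₁ t + M₂ t + M₁ t * M₂ t / R))
        Filter.atTop (nhds L) ∧
      |L - max X Y| ≤ RON / ROFF + RON / R :=
  memristor_max_circuit_computes_max_general RON ROFF R X Y hON hONOFF hOFFR hY hYX hX M₁ M₂ hM₁ hM₂
end

section
/- (Theorem 1, min-circuit.) Let 0 < R_ON < R_OFF < R, let 0 ≤ Y ≤ X ≤ 1, and suppose the memristances M₁, M₂ : ℝ → ℝ of the min-circuit take values in [R_ON, R_OFF] and satisfy M₁(t) → R_OFF and M₂(t) → R_ON as t → ∞. Then the output voltage Z'(t) = (X·M₂(t) + Y·M₁(t))/(M₁(t) + M₂(t) + M₁(t)M₂(t)/R) converges as t → ∞ to a limit L with |L − min(X,Y)| ≤ R_ON/R_OFF + R_ON/R; in particular, when R ≫ R_OFF ≫ R_ON the circuit computes min(X,Y) up to an arbitrarily small error. -/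
/-!
With `D = M₁ + M₂ + M₁M₂/R`, the output minus `Y` is `M₂ (X - Y - Y M₁/R) / D`. Both `X - Y ∈ [0, 1]`
and `Y M₁/R ∈ [0, M₁/R]`, so their difference is at most `1 + M₁/R` in absolute value, while
`D ≥ M₁`; at the limit `M₁ = R_OFF`, `M₂ = R_ON` this gives the error `R_ON/R_OFF + R_ON/R`.
-/

open Filter Topology

noncomputable def minCircuitOutput (R X Y m₁ m₂ : ℝ) : ℝ :=
  (X * m₂ + Y * m₁) / (m₁ + m₂ + m₁ * m₂ / R)

lemma tendsto_minCircuitOutput {α : Type*} {l : Filter α} {R X Y a b : ℝ} {M₁ M₂ : α → ℝ}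
    (h₁ : Tendsto M₁ l (𝓝 a)) (h₂ : Tendsto M₂ l (𝓝 b)) (hD : a + b + a * b / R ≠ 0) :
    Tendsto (fun t => minCircuitOutput R X Y (M₁ t) (M₂ t)) l
      (𝓝 (minCircuitOutput R X Y a b)) :=
  ((h₂.const_mul X).add (h₁.const_mul Y)).div ((h₁.add h₂).add ((h₁.mul h₂).div_const R)) hD

lemma minCircuitOutput_sub_right {R X Y a b : ℝ} (hD : a + b + a * b / R ≠ 0) :
    minCircuitOutput R X Y a b - Y = b * (X - Y - Y * a / R) / (a + b + a * b / R) := by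
  rw [minCircuitOutput, div_sub' hD]
  ring_nf

lemma abs_sub_sub_mul_div_le {R X Y a : ℝ} (hR : 0 < R) (ha : 0 ≤ a)
    (hY : 0 ≤ Y) (hYX : Y ≤ X) (hX : X ≤ 1) :
    |X - Y - Y * a / R| ≤ 1 + a / R := by
  have haR : 0 ≤ a / R := div_nonneg ha hR.le
  have hYaR : Y * a / R ≤ a / R := by
    rw [mul_div_assoc]
    exact mul_le_of_le_one_left haR (hYX.trans hX)
  have hYaR₀ : 0 ≤ Y * a / R := div_nonneg (mul_nonneg hY ha) hR.le
  exact abs_sub_le_of_nonneg_of_le (by linarith) (by linarith) hYaR₀ (by linarith)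

lemma abs_minCircuitOutput_sub_right_le {R X Y a b : ℝ} (hR : 0 < R) (ha : 0 < a) (hb : 0 ≤ b)
    (hY : 0 ≤ Y) (hYX : Y ≤ X) (hX : X ≤ 1) :
    |minCircuitOutput R X Y a b - Y| ≤ b / a + b / R := by
  have hD : a ≤ a + b + a * b / R := by
    have : 0 ≤ a * b / R := by positivity
    linarith
  have hDpos : 0 < a + b + a * b / R := ha.trans_le hD
  rw [minCircuitOutput_sub_right hDpos.ne', abs_div, abs_mul, abs_of_nonneg hb,
    abs_of_pos hDpos]
  calc b * |X - Y - Y * a / R| / (a + b + a * b / R)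
      ≤ b * (1 + a / R) / a := by
        gcongr
        exact abs_sub_sub_mul_div_le hR ha.le hY hYX hX
    _ = b / a + b / R := by field_simp

theorem memristor_min_circuit_computes_min_general
    (RON ROFF R X Y : ℝ)
    (hON : 0 < RON) (hONOFF : RON < ROFF) (hOFFR : ROFF < R)
    (hY : 0 ≤ Y) (hYX : Y ≤ X) (hX : X ≤ 1)
    (M₁ M₂ : ℝ → ℝ)
    (hM₁ : Filter.Tendsto M₁ Filter.atTop (nhds ROFF))
    (hM₂ : Filter.Tendsto M₂ Filter.atTop (nhds RON)) :
    ∃ L : ℝ,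
      Filter.Tendsto
        (fun t => (X * M₂ t + Y * M₁ t) / (M₁ t + M₂ t + M₁ t * M₂ t / R))
        Filter.atTop (nhds L) ∧
      |L - min X Y| ≤ RON / ROFF + RON / R := by
  have hOFF : 0 < ROFF := hON.trans hONOFF
  have hR : 0 < R := hOFF.trans hOFFR
  have hD : 0 < ROFF + RON + ROFF * RON / R := by positivity
  refine ⟨minCircuitOutput R X Y ROFF RON, tendsto_minCircuitOutput hM₁ hM₂ hD.ne', ?_⟩
  rw [min_eq_right hYX]
  exact abs_minCircuitOutput_sub_right_le hR hOFF hON.le hY hYX hX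

/-- Theorem 1, min-circuit: the output voltage Z'(t) converges to
a limit L with |L − min(X,Y)| ≤ R_ON/R_OFF + R_ON/R. -/
theorem memristor_min_circuit_computes_min
    (RON ROFF R X Y : ℝ)
    (hON : 0 < RON) (hONOFF : RON < ROFF) (hOFFR : ROFF < R)
    (hY : 0 ≤ Y) (hYX : Y ≤ X) (hX : X ≤ 1)
    (M₁ M₂ : ℝ → ℝ)
    (hM₁mem : ∀ t, M₁ t ∈ Set.Icc RON ROFF)
    (hM₂mem : ∀ t, M₂ t ∈ Set.Icc RON ROFF)
    (hM₁ : Filter.Tendsto M₁ Filter.atTop (nhds ROFF))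
    (hM₂ : Filter.Tendsto M₂ Filter.atTop (nhds RON)) :
    ∃ L : ℝ,
      Filter.Tendsto
        (fun t => (X * M₂ t + Y * M₁ t) / (M₁ t + M₂ t + M₁ t * M₂ t / R))
        Filter.atTop (nhds L) ∧
      |L - min X Y| ≤ RON / ROFF + RON / R :=
  memristor_min_circuit_computes_min_general RON ROFF R X Y hON hONOFF hOFFR hY hYX hX M₁ M₂ hM₁ hM₂
end
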